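/- arXiv:2111.12837 — 7 statements merged into one kernel-verified Lean document; each statement's English description precedes it below -/
import Mathlib

section
/- Let 0 < s ≤ r < 1. Then the function f(t) = t^r on [0,∞) is s-convex in the second sense, i.e., for all x, y ≥ 0 and λ ∈ [0,1], (λx + (1-λ)y)^r ≤ λ^s x^r + (1-λ)^s y^r. -/
lemma real_rpow_add_le {a b p : ℝ} (ha : 0 ≤ a) (hb : 0 ≤ b) (hp : 0 ≤ p) (hp1 : p ≤ 1) :
    (a + b) ^ p ≤ a ^ p + b ^ p := by
  lift a to NNReal using ha
  lift b to NNReal using hb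
  have := NNReal.rpow_add_le_add_rpow a b hp hp1
  push_cast [← NNReal.coe_rpow] at *
  exact_mod_cast this

theorem s_convex_rpow (s r : ℝ) (hs : 0 < s) (hsr : s ≤ r) (hr : r < 1)
    (x y l : ℝ) (hx : 0 ≤ x) (hy : 0 ≤ y) (hl : l ∈ Set.Icc (0:ℝ) 1) :
    (l * x + (1 - l) * y) ^ r ≤ l ^ s * x ^ r + (1 - l) ^ s * y ^ r := by
  obtain ⟨hl0, hl1⟩ := hl
  have hr0 : 0 < r := hs.trans_le hsr
  have key : ∀ t : ℝ, 0 ≤ t → t ≤ 1 → t ^ r ≤ t ^ s := by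
    intro t ht0 ht1
    rcases eq_or_lt_of_le ht0 with h | h
    · simp [← h, Real.zero_rpow hr0.ne', Real.zero_rpow hs.ne']
    · exact Real.rpow_le_rpow_of_exponent_ge h ht1 hsr
  calc (l * x + (1 - l) * y) ^ r
      ≤ (l * x) ^ r + ((1 - l) * y) ^ r := by
        exact real_rpow_add_le (mul_nonneg hl0 hx) (mul_nonneg (by linarith) hy) hr0.le hr.le
    _ = l ^ r * x ^ r + (1 - l) ^ r * y ^ r := by
        rw [Real.mul_rpow hl0 hx, Real.mul_rpow (by linarith) hy]
    _ ≤ l ^ s * x ^ r + (1 - l) ^ s * y ^ r := by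
        exact add_le_add
          (mul_le_mul_of_nonneg_right (key l hl0 hl1) (Real.rpow_nonneg hx r))
          (mul_le_mul_of_nonneg_right (key (1 - l) (by linarith) (by linarith))
            (Real.rpow_nonneg hy r))
end

section
/- Let X be a real normed space and 0 < s ≤ r < 1. Then the function f : X → ℝ defined by f(t) = ‖t‖^r satisfies f(λx + (1-λ)y) ≤ λ^s f(x) + (1-λ)^s f(y) for all x, y ∈ X and λ ∈ [0,1]. -/
/-! The triangle inequality and subadditivity of `t ↦ t ^ r` on `[0, ∞)` for `r ≤ 1` give
`‖λx + (1-λ)y‖^r ≤ λ^r ‖x‖^r + (1-λ)^r ‖y‖^r`; since `λ, 1-λ ∈ [0, 1]` and `s ≤ r`,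
the weights only grow when `r` is replaced by `s`. -/

theorem norm_smul_add_smul_rpow_le {X : Type*} [SeminormedAddCommGroup X] [NormedSpace ℝ X]
    {a b r : ℝ} (ha : 0 ≤ a) (hb : 0 ≤ b) (hr₀ : 0 ≤ r) (hr₁ : r ≤ 1) (x y : X) :
    ‖a • x + b • y‖ ^ r ≤ a ^ r * ‖x‖ ^ r + b ^ r * ‖y‖ ^ r :=
  calc ‖a • x + b • y‖ ^ r ≤ (a * ‖x‖ + b * ‖y‖) ^ r := by
        gcongr
        exact norm_add_le_of_le (norm_smul_of_nonneg ha x).le (norm_smul_of_nonneg hb y).le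
    _ ≤ (a * ‖x‖) ^ r + (b * ‖y‖) ^ r :=
        Real.rpow_add_le_add_rpow (by positivity) (by positivity) hr₀ hr₁
    _ = a ^ r * ‖x‖ ^ r + b ^ r * ‖y‖ ^ r := by
        rw [Real.mul_rpow ha (norm_nonneg x), Real.mul_rpow hb (norm_nonneg y)]

theorem s_convex_norm_rpow (X : Type*) [NormedAddCommGroup X] [NormedSpace ℝ X]
    (s r : ℝ) (hs : 0 < s) (hsr : s ≤ r) (hr : r < 1)
    (x y : X) (l : ℝ) (hl : l ∈ Set.Icc (0:ℝ) 1) :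
    ‖l • x + (1 - l) • y‖ ^ r ≤ l ^ s * ‖x‖ ^ r + (1 - l) ^ s * ‖y‖ ^ r := by
  obtain ⟨hl₀, hl₁⟩ := hl
  have hl₀' : 0 ≤ 1 - l := sub_nonneg.2 hl₁
  have hl₁' : 1 - l ≤ 1 := sub_le_self 1 hl₀
  calc ‖l • x + (1 - l) • y‖ ^ r ≤ l ^ r * ‖x‖ ^ r + (1 - l) ^ r * ‖y‖ ^ r :=
        norm_smul_add_smul_rpow_le hl₀ hl₀' (hs.le.trans hsr) hr.le x y
    _ ≤ l ^ s * ‖x‖ ^ r + (1 - l) ^ s * ‖y‖ ^ r := by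
        gcongr ?_ * _ + ?_ * _
        · exact Real.rpow_le_rpow_of_exponent_ge' hl₀ hl₁ hs.le hsr
        · exact Real.rpow_le_rpow_of_exponent_ge' hl₀' hl₁' hs.le hsr
end

section
/- Let 0 < m < M, let q, K, k be real numbers with K > k, K/M > k/m, and (k/m)·q ≤ (K-k)/(M-m) ≤ (K/M)·q for some q > 1. Then for all t ∈ [m, M], h(t) = t^{-q}(k + ((K-k)/(M-m))(t-m)) ≤ ((mK - Mk)/((q-1)(M-m))) · ((q-1)(K-k)/(q(mK - Mk)))^q. -/
/-!
Put `D = mK - Mk`, `A = D / ((q-1)(M-m))` and `s = (q-1)(K-k) / (qD)`. The affine numerator of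
`h` is then `A (1 + q (s t - 1))`, and Bernoulli's inequality bounds it by `A (s t)^q`; dividing by
`t^q` gives `h(t) ≤ A s^q`, with equality exactly at the critical point `t₁ = 1/s`.
-/

open Real

theorem rpow_neg_mul_affine_le {q A s t : ℝ} (hq : 1 ≤ q) (hA : 0 ≤ A) (hs : 0 < s)
    (ht : 0 < t) : t ^ (-q) * (A * (1 + q * (s * t - 1))) ≤ A * s ^ q := by
  have bernoulli : 1 + q * (s * t - 1) ≤ (s * t) ^ q := by
    simpa using one_add_mul_self_le_rpow_one_add (s := s * t - 1) (by nlinarith) hq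
  calc t ^ (-q) * (A * (1 + q * (s * t - 1)))
      ≤ t ^ (-q) * (A * (s * t) ^ q) := by gcongr
    _ = A * s ^ q * (t ^ q)⁻¹ * t ^ q := by
        rw [mul_rpow hs.le ht.le, rpow_neg ht.le]; ring
    _ = A * s ^ q := inv_mul_cancel_right₀ (rpow_pos_of_pos ht q).ne' _

theorem furuta_lemma_upper_bound_general (m M K k q : ℝ) (hm : 0 < m) (hmM : m < M)
    (hKk : K > k) (hKM : K / M > k / m) (hq : 1 < q)
    (t : ℝ) (ht : t ∈ Set.Icc m M) :
    t ^ (-q) * (k + (K - k) / (M - m) * (t - m)) ≤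
      (m * K - M * k) / ((q - 1) * (M - m)) *
        ((q - 1) * (K - k) / (q * (m * K - M * k))) ^ q := by
  have hMm : 0 < M - m := sub_pos.mpr hmM
  have hq1 : 0 < q - 1 := sub_pos.mpr hq
  set D := m * K - M * k with hD_def
  have hD : 0 < D := by
    rw [gt_iff_lt, div_lt_div_iff₀ hm (hm.trans hmM)] at hKM
    linarith
  have numerator_eq : k + (K - k) / (M - m) * (t - m) =
      D / ((q - 1) * (M - m)) * (1 + q * ((q - 1) * (K - k) / (q * D) * t - 1)) := by
    field_simp [hD.ne', hMm.ne', hq1.ne', (zero_lt_one.trans hq).ne']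
    linear_combination (1 - q) * hD_def
  rw [numerator_eq]
  exact rpow_neg_mul_affine_le hq.le (by positivity)
    (div_pos (mul_pos hq1 (sub_pos.mpr hKk)) (by positivity)) (hm.trans_le ht.1)

theorem furuta_lemma_upper_bound (m M K k q : ℝ) (hm : 0 < m) (hmM : m < M)
    (hKk : K > k) (hKM : K / M > k / m) (hq : 1 < q)
    (h1 : (k / m) * q ≤ (K - k) / (M - m)) (h2 : (K - k) / (M - m) ≤ (K / M) * q)
    (t : ℝ) (ht : t ∈ Set.Icc m M) :
    t ^ (-q) * (k + (K - k) / (M - m) * (t - m)) ≤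
      (m * K - M * k) / ((q - 1) * (M - m)) *
        ((q - 1) * (K - k) / (q * (m * K - M * k))) ^ q :=
  furuta_lemma_upper_bound_general m M K k q hm hmM hKk hKM hq t ht
end

section
/- Let 0 < m < M, let K, k be real numbers with K > k, K/M < k/m, and (K/M)·q ≤ (K-k)/(M-m) ≤ (k/m)·q for some q with 0 < q < 1. Then for all t ∈ [m, M], h(t) = t^{-q}(k + ((K-k)/(M-m))(t-m)) ≥ ((mK - Mk)/((q-1)(M-m))) · ((q-1)(K-k)/(q(mK - Mk)))^q. -/
/-!
Writing `a = (Mk - mK)/(M - m) > 0` and `c = (K - k)/(M - m) > 0`, the function is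
`h t = t^(-q) (a + c t)`, whose minimum over all `t > 0` is attained at `t₁ = q a / ((1 - q) c)`.
After the substitution `s = t / t₁` the inequality `h t₁ ≤ h t` becomes Bernoulli's inequality
`s^q ≤ 1 + q (s - 1)` for `0 < q < 1`.
-/

open Real

theorem le_rpow_neg_mul_add {a c q t : ℝ} (ha : 0 < a) (hc : 0 < c) (hq0 : 0 < q) (hq1 : q < 1)
    (ht : 0 < t) :
    a / (1 - q) * ((1 - q) * c / (q * a)) ^ q ≤ t ^ (-q) * (a + c * t) := by
  have h1q : 0 < 1 - q := by linarith
  set r := (1 - q) * c / (q * a) with hr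
  have hr0 : 0 ≤ r := by positivity
  have bernoulli : (r * t) ^ q ≤ 1 + q * (r * t - 1) := by
    simpa using rpow_one_add_le_one_add_mul_self (s := r * t - 1) (by nlinarith [mul_nonneg hr0 ht.le])
      hq0.le hq1.le
  have htq : t ^ (-q) * t ^ q = 1 := by
    rw [rpow_neg ht.le, inv_mul_cancel₀ (rpow_pos_of_pos ht q).ne']
  calc a / (1 - q) * r ^ q = t ^ (-q) * (a / (1 - q) * (r * t) ^ q) := by
        rw [mul_rpow hr0 ht.le]; linear_combination (a / (1 - q) * r ^ q) * htq.symm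
    _ ≤ t ^ (-q) * (a / (1 - q) * (1 + q * (r * t - 1))) := by gcongr
    _ = t ^ (-q) * (a + c * t) := by rw [hr]; field_simp; ring

theorem furuta_lemma_lower_bound_general (m M K k q : ℝ) (hm : 0 < m) (hmM : m < M)
    (hKk : K > k) (hKM : K / M < k / m) (hq0 : 0 < q) (hq1 : q < 1)
    (t : ℝ) (ht : t ∈ Set.Icc m M) :
    (m * K - M * k) / ((q - 1) * (M - m)) *
        ((q - 1) * (K - k) / (q * (m * K - M * k))) ^ q ≤
      t ^ (-q) * (k + (K - k) / (M - m) * (t - m)) := by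
  have hMm : 0 < M - m := by linarith
  have hkm : m * K < M * k := by
    rw [div_lt_div_iff₀ (hm.trans hmM) hm] at hKM; linarith
  have hq_sub_one : q - 1 ≠ 0 := by linarith
  have hone_sub_q : 1 - q ≠ 0 := by linarith
  have hd : m * K - M * k ≠ 0 := by linarith
  have hd' : M * k - m * K ≠ 0 := by linarith
  have key := le_rpow_neg_mul_add (a := (M * k - m * K) / (M - m)) (c := (K - k) / (M - m))
    (div_pos (by linarith) hMm) (div_pos (by linarith) hMm) hq0 hq1 (hm.trans_le ht.1)
  convert key using 2
  · field_simp; ring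
  · congr 1
    rw [div_eq_div_iff (mul_ne_zero hq0.ne' hd) (mul_ne_zero hq0.ne' (div_ne_zero hd' hMm.ne'))]
    field_simp; ring
  · field_simp; ring

theorem furuta_lemma_lower_bound (m M K k q : ℝ) (hm : 0 < m) (hmM : m < M)
    (hKk : K > k) (hKM : K / M < k / m) (hq0 : 0 < q) (hq1 : q < 1)
    (h1 : (K / M) * q ≤ (K - k) / (M - m)) (h2 : (K - k) / (M - m) ≤ (k / m) * q)
    (t : ℝ) (ht : t ∈ Set.Icc m M) :
    (m * K - M * k) / ((q - 1) * (M - m)) *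
        ((q - 1) * (K - k) / (q * (m * K - M * k))) ^ q ≤
      t ^ (-q) * (k + (K - k) / (M - m) * (t - m)) :=
  furuta_lemma_lower_bound_general m M K k q hm hmM hKk hKM hq0 hq1 t ht
end

section
/- Let 0 < m < M, let K, k be real numbers with K > k, K/M < k/m, and (K/M)·q ≤ (K-k)/(M-m) ≤ (k/m)·q for some q with 0 < q < 1. Then for all t ∈ [m, M], h(t) = t^{-q}(k + ((K-k)/(M-m))(t-m)) ≤ max{k/m^q, K/M^q}. -/
/-!
Write `t = (1 - s) m + s M`, so that the numerator of `h(t)` is `(1 - s) k + s K`. If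
`C = max (k / m^q) (K / M^q)` is nonnegative, concavity of `x ↦ x^q` gives
`(1 - s) k + s K ≤ C ((1 - s) m^q + s M^q) ≤ C t^q`. If `C < 0`, then `t^q ≤ M^q` gives
`C M^q ≤ C t^q`, and the numerator is at most `K ≤ C M^q` because `k ≤ K`.
-/

lemma convexComb_le_mul_rpow_convexComb {m M k K q a b C : ℝ} (hm : 0 ≤ m) (hmM : m ≤ M)
    (hkK : k ≤ K) (hq0 : 0 ≤ q) (hq1 : q ≤ 1) (ha : 0 ≤ a) (hb : 0 ≤ b) (hab : a + b = 1)
    (hk : k ≤ C * m ^ q) (hK : K ≤ C * M ^ q) :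
    a * k + b * K ≤ C * (a * m + b * M) ^ q := by
  rcases le_or_gt 0 C with hC | hC
  · have hconc : a * m ^ q + b * M ^ q ≤ (a * m + b * M) ^ q := by
      simpa only [smul_eq_mul] using (Real.concaveOn_rpow hq0 hq1).2
        (Set.mem_Ici.2 hm) (Set.mem_Ici.2 (hm.trans hmM)) ha hb hab
    calc a * k + b * K ≤ a * (C * m ^ q) + b * (C * M ^ q) := by gcongr
      _ = C * (a * m ^ q + b * M ^ q) := by ring
      _ ≤ C * (a * m + b * M) ^ q := by gcongr
  · have hle_M : a * m + b * M ≤ M := calc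
      a * m + b * M = M - a * (M - m) := by linear_combination M * hab
      _ ≤ M := sub_le_self _ (mul_nonneg ha (sub_nonneg.2 hmM))
    have hpow : (a * m + b * M) ^ q ≤ M ^ q :=
      Real.rpow_le_rpow (add_nonneg (mul_nonneg ha hm) (mul_nonneg hb (hm.trans hmM))) hle_M hq0
    calc a * k + b * K = K - a * (K - k) := by linear_combination K * hab
      _ ≤ K := sub_le_self _ (mul_nonneg ha (sub_nonneg.2 hkK))
      _ ≤ C * M ^ q := hK
      _ ≤ C * (a * m + b * M) ^ q := mul_le_mul_of_nonpos_left hpow hC.le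

theorem furuta_lemma_endpoint_max_general (m M K k q : ℝ) (hm : 0 < m)
    (hKk : K > k) (hq0 : 0 < q) (hq1 : q < 1)
    (t : ℝ) (ht : t ∈ Set.Icc m M) :
    t ^ (-q) * (k + (K - k) / (M - m) * (t - m)) ≤ max (k / m ^ q) (K / M ^ q) := by
  obtain ⟨hmt, htM⟩ := ht
  have ht0 : 0 < t := hm.trans_le hmt
  have hM : 0 < M := ht0.trans_le htM
  set s := (t - m) / (M - m)
  have hs0 : 0 ≤ s := div_nonneg (by linarith) (by linarith)
  have hs1 : s ≤ 1 := div_le_one_of_le₀ (by linarith) (by linarith)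
  -- also when `M = m`: then `s = 0` (division by zero) and `t = m`
  have ht_eq : (1 - s) * m + s * M = t := by
    linear_combination div_mul_cancel_of_imp (a := t - m) (b := M - m) fun h => by linarith
  have hnum : k + (K - k) / (M - m) * (t - m) = (1 - s) * k + s * K := by ring
  set C := max (k / m ^ q) (K / M ^ q)
  have hk : k ≤ C * m ^ q := (div_le_iff₀ (by positivity)).1 (le_max_left _ _)
  have hK : K ≤ C * M ^ q := (div_le_iff₀ (by positivity)).1 (le_max_right _ _)
  have key := convexComb_le_mul_rpow_convexComb hm.le (hmt.trans htM) hKk.le hq0.le hq1.le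
    (sub_nonneg.2 hs1) hs0 (sub_add_cancel 1 s) hk hK
  rw [ht_eq, ← hnum] at key
  rw [Real.rpow_neg ht0.le, inv_mul_eq_div, div_le_iff₀ (by positivity)]
  exact key

theorem furuta_lemma_endpoint_max (m M K k q : ℝ) (hm : 0 < m) (hmM : m < M)
    (hKk : K > k) (hKM : K / M < k / m) (hq0 : 0 < q) (hq1 : q < 1)
    (h1 : (K / M) * q ≤ (K - k) / (M - m)) (h2 : (K - k) / (M - m) ≤ (k / m) * q)
    (t : ℝ) (ht : t ∈ Set.Icc m M) :
    t ^ (-q) * (k + (K - k) / (M - m) * (t - m)) ≤ max (k / m ^ q) (K / M ^ q) :=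
  furuta_lemma_endpoint_max_general m M K k q hm hKk hq0 hq1 t ht
end

section
/- Let A be a positive operator on a Hilbert space H with m ≤ A ≤ M, 0 < m < M, and let 0 < s < p < 1, 0 < q < 1 with M^{p-1}·q ≤ (M^p - m^p)/(M - m) ≤ m^{p-1}·q. Then for every unit vector x, ⟨A^p x, x⟩ ≤ 2^{1-s}·max{m^{p-q}, M^{p-q}}·⟨Ax, x⟩^q. -/
/-!
Since `t ↦ t ^ p` is concave for `0 ≤ p ≤ 1`, it lies below its tangent line at `a = ⟪A x, x⟫`;
applying this inequality to the spectrum of `A` and taking the quadratic form at the unit vector `x`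
gives the Hölder–McCarthy inequality `⟪A ^ p x, x⟫ ≤ ⟪A x, x⟫ ^ p`. Then
`a ^ p = a ^ (p - q) * a ^ q`, the factor `a ^ (p - q)` is bounded on `[m, M]` by its value at an
endpoint, and `2 ^ (1 - s) ≥ 1`.
-/

lemma Real.rpow_le_tangent {a t p : ℝ} (ha : 0 < a) (ht : 0 ≤ t) (hp0 : 0 ≤ p) (hp1 : p ≤ 1) :
    t ^ p ≤ a ^ p + p * a ^ (p - 1) * (t - a) := by
  have hta : 0 ≤ t / a := div_nonneg ht ha.le
  have bernoulli := rpow_one_add_le_one_add_mul_self (s := t / a - 1) (by linarith) hp0 hp1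
  rw [add_sub_cancel] at bernoulli
  calc t ^ p = a ^ p * (t / a) ^ p := by
        rw [← Real.mul_rpow ha.le hta, mul_div_cancel₀ _ ha.ne']
    _ ≤ a ^ p * (1 + p * (t / a - 1)) := by gcongr
    _ = a ^ p + p * a ^ (p - 1) * (t - a) := by
        rw [Real.rpow_sub_one ha.ne']
        field_simp

lemma Real.rpow_le_max_of_mem_Icc {m M a r : ℝ} (hm : 0 < m) (ham : m ≤ a) (haM : a ≤ M) :
    a ^ r ≤ max (m ^ r) (M ^ r) := by
  rcases le_total 0 r with hr | hr
  · exact (Real.rpow_le_rpow (hm.le.trans ham) haM hr).trans (le_max_right _ _)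
  · exact (Real.rpow_le_rpow_of_nonpos hm ham hr).trans (le_max_left _ _)

section CStarAlgebra

variable {B : Type*} [CStarAlgebra B] [PartialOrder B] [StarOrderedRing B]

lemma cfc_rpow_le_tangent {A : B} (hA : 0 ≤ A) {a p : ℝ} (ha : 0 < a) (hp0 : 0 ≤ p) (hp1 : p ≤ 1) :
    cfc (fun t : ℝ => t ^ p) A ≤
      algebraMap ℝ B (a ^ p - p * a ^ (p - 1) * a) + (p * a ^ (p - 1)) • A := by
  have hsa : IsSelfAdjoint A := hA.isSelfAdjoint
  calc cfc (fun t : ℝ => t ^ p) A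
      ≤ cfc (fun t : ℝ => (a ^ p - p * a ^ (p - 1) * a) + p * a ^ (p - 1) * t) A := by
        refine cfc_mono (fun t ht => ?_) (fun t _ =>
          (Real.continuousAt_rpow_const t p (Or.inr hp0)).continuousWithinAt)
        have := Real.rpow_le_tangent ha (spectrum_nonneg_of_nonneg hA ht) hp0 hp1
        linarith
    _ = _ := by rw [cfc_const_add _ _ A, cfc_const_mul_id _ A]

end CStarAlgebra

namespace ContinuousLinearMap

variable {H : Type*} [NormedAddCommGroup H] [InnerProductSpace ℂ H]

lemma re_inner_le_re_inner_of_le {S T : H →L[ℂ] H} (h : S ≤ T) (x : H) :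
    (inner ℂ (S x) x).re ≤ (inner ℂ (T x) x).re := by
  have := ((le_def S T).mp h).re_inner_nonneg_left x
  rwa [sub_apply, inner_sub_left, map_sub, sub_nonneg] at this

lemma re_inner_algebraMap_add_smul_apply (c d : ℝ) (T : H →L[ℂ] H) {x : H} (hx : ‖x‖ = 1) :
    (inner ℂ ((algebraMap ℝ (H →L[ℂ] H) c + d • T) x) x).re =
      c + d * (inner ℂ (T x) x).re := by
  simp [Algebra.algebraMap_eq_smul_one, hx]

variable [CompleteSpace H]

/-- The Hölder–McCarthy inequality. -/
lemma re_inner_cfc_rpow_le {A : H →L[ℂ] H} (hA : A.IsPositive) {p : ℝ} (hp0 : 0 ≤ p)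
    (hp1 : p ≤ 1) {x : H} (hx : ‖x‖ = 1) (hAx : 0 < (inner ℂ (A x) x).re) :
    (inner ℂ (cfc (fun t : ℝ => t ^ p) A x) x).re ≤ (inner ℂ (A x) x).re ^ p := by
  set a := (inner ℂ (A x) x).re
  have tangent := cfc_rpow_le_tangent ((nonneg_iff_isPositive A).mpr hA) hAx hp0 hp1
  calc (inner ℂ (cfc (fun t : ℝ => t ^ p) A x) x).re
      ≤ a ^ p - p * a ^ (p - 1) * a + p * a ^ (p - 1) * a := by
        rw [← re_inner_algebraMap_add_smul_apply _ _ A hx]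
        exact re_inner_le_re_inner_of_le tangent x
    _ = a ^ p := sub_add_cancel _ _

end ContinuousLinearMap

theorem kantorovich_power_general {H : Type*} [NormedAddCommGroup H]
    [InnerProductSpace ℂ H] [CompleteSpace H]
    (A : H →L[ℂ] H) (hA : A.IsPositive) (m M s p q : ℝ) (hm : 0 < m)
    (hs : 0 < s) (hsp : s < p) (hp1 : p < 1)
    (hAm : ∀ x : H, m * ‖x‖ ^ 2 ≤ (inner ℂ (A x) x : ℂ).re)
    (hAM : ∀ x : H, (inner ℂ (A x) x : ℂ).re ≤ M * ‖x‖ ^ 2)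
    (x : H) (hx : ‖x‖ = 1) :
    (inner ℂ ((cfc (fun t : ℝ => t ^ p) A) x) x : ℂ).re ≤
      2 ^ (1 - s) * max (m ^ (p - q)) (M ^ (p - q)) * (inner ℂ (A x) x : ℂ).re ^ q := by
  set a := (inner ℂ (A x) x).re
  have ham : m ≤ a := by simpa [hx] using hAm x
  have haM : a ≤ M := by simpa [hx] using hAM x
  have ha : 0 < a := hm.trans_le ham
  have h2s : (1 : ℝ) ≤ 2 ^ (1 - s) := Real.one_le_rpow one_le_two (by linarith)
  calc (inner ℂ (cfc (fun t : ℝ => t ^ p) A x) x).re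
      ≤ a ^ p := A.re_inner_cfc_rpow_le hA (by linarith) hp1.le hx ha
    _ = a ^ (p - q) * a ^ q := by rw [← Real.rpow_add ha, sub_add_cancel]
    _ ≤ max (m ^ (p - q)) (M ^ (p - q)) * a ^ q := by
        gcongr; exact Real.rpow_le_max_of_mem_Icc hm ham haM
    _ ≤ 2 ^ (1 - s) * max (m ^ (p - q)) (M ^ (p - q)) * a ^ q := by
        gcongr
        exact le_mul_of_one_le_left (le_max_of_le_left (Real.rpow_pos_of_pos hm _).le) h2s

theorem kantorovich_power {H : Type*} [NormedAddCommGroup H]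
    [InnerProductSpace ℂ H] [CompleteSpace H]
    (A : H →L[ℂ] H) (hA : A.IsPositive) (m M s p q : ℝ) (hm : 0 < m) (hmM : m < M)
    (hs : 0 < s) (hsp : s < p) (hp1 : p < 1) (hq0 : 0 < q) (hq1 : q < 1)
    (hAm : ∀ x : H, m * ‖x‖ ^ 2 ≤ (inner ℂ (A x) x : ℂ).re)
    (hAM : ∀ x : H, (inner ℂ (A x) x : ℂ).re ≤ M * ‖x‖ ^ 2)
    (h1 : M ^ (p - 1) * q ≤ (M ^ p - m ^ p) / (M - m))
    (h2 : (M ^ p - m ^ p) / (M - m) ≤ m ^ (p - 1) * q)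
    (x : H) (hx : ‖x‖ = 1) :
    (inner ℂ ((cfc (fun t : ℝ => t ^ p) A) x) x : ℂ).re ≤
      2 ^ (1 - s) * max (m ^ (p - q)) (M ^ (p - q)) * (inner ℂ (A x) x : ℂ).re ^ q :=
  kantorovich_power_general A hA m M s p q hm hs hsp hp1 hAm hAM x hx
end

section
/- Let 0 < m < M, K > k real, and 0 < q < 1 with q·m^{q-1} ≥ (K-k)/(M-m) ≥ q·M^{q-1}. Define u(t) = k + ((K-k)/(M-m))(t-m) - t^q on [m,M]. Then for all t ∈ [m,M], u(t) ≥ k + ((K-k)/(M-m))·(((K-k)/(q(M-m)))^{1/(q-1)} - m) - ((K-k)/(q(M-m)))^{q/(q-1)}, and u(t) ≤ max{k - m^q, K - M^q}. -/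
/-!
The function `u t = k + c (t - m) - t ^ q`, with `c = (K - k) / (M - m)`, is convex because
`t ↦ t ^ q` is concave for `0 < q < 1`. Hence `u` is bounded above on `[m, M]` by its values at the
endpoints, and bounded below by its value at its critical point `t₁ = (c / q) ^ (1 / (q - 1))`,
where the tangent line of `t ↦ t ^ q` has slope `c`.
-/

open Real

namespace Real

variable {q : ℝ}

theorem rpow_le_rpow_add_tangent (hq0 : 0 ≤ q) (hq1 : q ≤ 1) {x y : ℝ} (hx : 0 ≤ x)
    (hy : 0 < y) : x ^ q ≤ y ^ q + q * y ^ (q - 1) * (x - y) := by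
  have young : x ^ q * y ^ (1 - q) ≤ q * x + (1 - q) * y :=
    geom_mean_le_arith_mean2_weighted hq0 (by linarith) hx hy.le (by ring)
  have hinv : y ^ (1 - q) * y ^ (q - 1) = 1 := by
    rw [← rpow_add hy, show 1 - q + (q - 1) = 0 by ring, rpow_zero]
  have hyq : y * y ^ (q - 1) = y ^ q := by
    rw [mul_comm, ← rpow_add_one hy.ne', sub_add_cancel]
  have hpos : 0 ≤ y ^ (q - 1) := (rpow_pos_of_pos hy _).le
  calc x ^ q = x ^ q * y ^ (1 - q) * y ^ (q - 1) := by rw [mul_assoc, hinv, mul_one]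
    _ ≤ (q * x + (1 - q) * y) * y ^ (q - 1) := mul_le_mul_of_nonneg_right young hpos
    _ = y ^ q + q * y ^ (q - 1) * (x - y) := by rw [← hyq]; ring

theorem mul_sub_rpow_critical_le (hq0 : 0 < q) (hq1 : q < 1) {c x : ℝ} (hc : 0 < c)
    (hx : 0 ≤ x) :
    c * (c / q) ^ (1 / (q - 1)) - (c / q) ^ (q / (q - 1)) ≤ c * x - x ^ q := by
  have hcq : 0 < c / q := div_pos hc hq0
  have hq1' : q - 1 ≠ 0 := by linarith
  set t₁ := (c / q) ^ (1 / (q - 1)) with ht₁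
  have hslope : q * t₁ ^ (q - 1) = c := by
    rw [ht₁, ← rpow_mul hcq.le, one_div_mul_cancel hq1', rpow_one]
    field_simp
  have hvalue : t₁ ^ q = (c / q) ^ (q / (q - 1)) := by
    rw [ht₁, ← rpow_mul hcq.le, one_div_mul_eq_div]
  have tangent := rpow_le_rpow_add_tangent hq0.le hq1.le hx (rpow_pos_of_pos hcq (1 / (q - 1)))
  rw [hslope] at tangent
  linarith

theorem convexOn_add_mul_sub_rpow (hq0 : 0 ≤ q) (hq1 : q ≤ 1) (a c : ℝ) :
    ConvexOn ℝ (Set.Ici 0) fun t => a + c * t - t ^ q := by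
  have hlin : ConvexOn ℝ (Set.Ici 0) fun t : ℝ => a + c * t :=
    ⟨convex_Ici 0, fun x _ y _ α β _ _ hab => le_of_eq <| by
      simp only [smul_eq_mul]; linear_combination (-a) * hab⟩
  exact hlin.sub (concaveOn_rpow hq0 hq1)

end Real

theorem difference_lemma_bounds_general (m M K k q : ℝ) (hm : 0 < m) (hmM : m < M)
    (hKk : K > k) (hq0 : 0 < q) (hq1 : q < 1)
    (t : ℝ) (ht : t ∈ Set.Icc m M) :
    (k + (K - k) / (M - m) * (((K - k) / (q * (M - m))) ^ (1 / (q - 1)) - m)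
        - ((K - k) / (q * (M - m))) ^ (q / (q - 1))
      ≤ k + (K - k) / (M - m) * (t - m) - t ^ q) ∧
    k + (K - k) / (M - m) * (t - m) - t ^ q ≤ max (k - m ^ q) (K - M ^ q) := by
  have hMm : 0 < M - m := by linarith
  set c := (K - k) / (M - m) with hc
  have hcq : (K - k) / (q * (M - m)) = c / q := by rw [hc, div_div, mul_comm]
  have ht0 : 0 ≤ t := hm.le.trans ht.1
  constructor
  · rw [hcq]
    have := mul_sub_rpow_critical_le hq0 hq1 (div_pos (sub_pos.2 hKk) hMm) ht0
    linarith
  · have hconv := convexOn_add_mul_sub_rpow hq0.le hq1.le (k - c * m) c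
    have hend := hconv.le_max_of_mem_Icc (Set.mem_Ici.2 hm.le)
      (Set.mem_Ici.2 (hm.trans hmM).le) ht
    have hcM : c * (M - m) = K - k := div_mul_cancel₀ _ hMm.ne'
    calc k + c * (t - m) - t ^ q = k - c * m + c * t - t ^ q := by ring
      _ ≤ _ := hend
      _ = max (k - m ^ q) (K - M ^ q) := by congr 1 <;> linarith

theorem difference_lemma_bounds (m M K k q : ℝ) (hm : 0 < m) (hmM : m < M)
    (hKk : K > k) (hq0 : 0 < q) (hq1 : q < 1)
    (h1 : q * m ^ (q - 1) ≥ (K - k) / (M - m))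
    (h2 : (K - k) / (M - m) ≥ q * M ^ (q - 1))
    (t : ℝ) (ht : t ∈ Set.Icc m M) :
    (k + (K - k) / (M - m) * (((K - k) / (q * (M - m))) ^ (1 / (q - 1)) - m)
        - ((K - k) / (q * (M - m))) ^ (q / (q - 1))
      ≤ k + (K - k) / (M - m) * (t - m) - t ^ q) ∧
    k + (K - k) / (M - m) * (t - m) - t ^ q ≤ max (k - m ^ q) (K - M ^ q) :=
  difference_lemma_bounds_general m M K k q hm hmM hKk hq0 hq1 t ht
end
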